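/- arXiv:1410.8116 — 2 statements merged into one kernel-verified Lean document; each statement's English description precedes it below -/
import Mathlib

section
/- Let S be a finite set of real numbers with at least two elements, let m = min S and M = max S, and let d be a real number with d ∉ S and d > m. Then (M − m)·Δ((S ∪ {d}) \ {M})·Δ(S \ {m}) = (d − m)·Δ(S)·Δ((S ∪ {d}) \ {m, M}). -/
/-!
Adding a new point `a` to a finite set `B` multiplies `Δ` by the distances `∏ x ∈ B, |a - x|`.
Writing `S = {m, M} ∪ C`, both sides of the identity are built from `Δ(C)` by such insertions,
and both become `Δ(C)²` times the same product of distances from `d`, `m`, `M` to `C`,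
times `|d - m| |M - m|`.
-/

/-- `Δ(A) = ∏_{x,y ∈ A, x < y} (y - x)`. -/
noncomputable def delta (A : Finset ℝ) : ℝ :=
  ∏ x ∈ A, ∏ y ∈ A.filter (fun y => x < y), (y - x)

open Finset

theorem delta_insert {a : ℝ} {B : Finset ℝ} (ha : a ∉ B) :
    delta (insert a B) = delta B * ∏ x ∈ B, |a - x| := by
  have hrow :
      ∏ y ∈ (insert a B).filter (a < ·), (y - a) = ∏ x ∈ B, if a < x then x - a else 1 := by
    rw [filter_insert, if_neg (lt_irrefl a), prod_filter]
  have hcol (x : ℝ) (_ : x ∈ B) : ∏ y ∈ (insert a B).filter (x < ·), (y - x) =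
      (if x < a then a - x else 1) * ∏ y ∈ B.filter (x < ·), (y - x) := by
    rw [filter_insert]
    split_ifs with h
    · exact prod_insert fun hmem => ha (mem_filter.mp hmem).1
    · rw [one_mul]
  have habs (x : ℝ) (hx : x ∈ B) :
      |a - x| = (if x < a then a - x else 1) * (if a < x then x - a else 1) := by
    rcases lt_trichotomy x a with h | rfl | h
    · simp [h, h.not_gt, abs_of_pos (sub_pos.mpr h)]
    · exact absurd hx ha
    · simp [h, h.not_gt, abs_of_neg (sub_neg.mpr h)]
  unfold delta
  rw [prod_insert ha, hrow, prod_congr rfl hcol, prod_congr rfl habs, prod_mul_distrib,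
    prod_mul_distrib]
  ring

theorem abs_sub_mul_delta_insert_insert {C : Finset ℝ} {m M d : ℝ}
    (hmC : m ∉ C) (hMC : M ∉ C) (hdC : d ∉ C) (hmM : m ≠ M) (hdm : d ≠ m) :
    |M - m| * delta (insert d (insert m C)) * delta (insert M C) =
      |d - m| * delta (insert m (insert M C)) * delta (insert d C) := by
  have hdmC : d ∉ insert m C := by simp [hdm, hdC]
  have hmMC : m ∉ insert M C := by simp [hmM, hmC]
  rw [delta_insert hdmC, delta_insert hmC, delta_insert hmMC, delta_insert hMC, delta_insert hdC,
    prod_insert hmC, prod_insert hMC, abs_sub_comm m M]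
  ring

/-- Ratio simplification (23) of the paper, multiplied out. -/
theorem delta_ratio_23 (S : Finset ℝ) (m M d : ℝ)
    (hcard : 2 ≤ S.card)
    (hmS : m ∈ S) (hm : ∀ x ∈ S, m ≤ x)
    (hMS : M ∈ S) (hM : ∀ x ∈ S, x ≤ M)
    (hdS : d ∉ S) (hmd : m < d) :
    (M - m) * delta ((insert d S).erase M) * delta (S.erase m) =
      (d - m) * delta S * delta (((insert d S).erase m).erase M) := by
  have hmM : m < M := by
    obtain ⟨a, ha, b, hb, hab⟩ := one_lt_card.mp hcard
    refine lt_of_le_of_ne (hm M hMS) fun h => hab ?_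
    linarith [hm a ha, hm b hb, hM a ha, hM b hb]
  have hdm : d ≠ m := hmd.ne'
  have hdM : d ≠ M := fun h => hdS (h ▸ hMS)
  set C := (S.erase m).erase M
  have hmC : m ∉ C := by simp [C]
  have hMC : M ∉ C := by simp [C]
  have hdC : d ∉ C := by simp [C, hdS]
  have hS : S = insert m (insert M C) := by
    rw [insert_erase (mem_erase.mpr ⟨hmM.ne', hMS⟩), insert_erase hmS]
  have key := abs_sub_mul_delta_insert_insert hmC hMC hdC hmM.ne hdm
  rw [abs_of_pos (sub_pos.mpr hmM), abs_of_pos (sub_pos.mpr hmd)] at key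
  have h1 : (insert d S).erase M = insert d (insert m C) := by
    rw [erase_insert_of_ne hdM, hS, erase_insert_of_ne hmM.ne, erase_insert hMC]
  have h2 : S.erase m = insert M C := by
    rw [hS, erase_insert (by simp [hmM.ne, hmC])]
  have h3 : ((insert d S).erase m).erase M = insert d C := by
    rw [erase_insert_of_ne hdm, erase_insert_of_ne hdM]
  rwa [h1, h2, h3, hS]
end

section
/- Let S be a finite set of real numbers with at least two elements, let m = min S and M = max S, and let d be a real number with d ∉ S. Then (M + m)·⋆((S ∪ {d}) \ {M})·⋆(S \ {m}) = (d + m)·⋆(S)·⋆((S ∪ {d}) \ {m, M}). -/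
/-- `⋆(A) = ∏_{x,y ∈ A, x < y} (x + y)`. -/
noncomputable def starOp' (A : Finset ℝ) : ℝ :=
  ∏ x ∈ A, ∏ y ∈ A.filter (fun y => x < y), (x + y)

/-!
Adding a new element `a` to `A` multiplies `⋆` by `∏_{x ∈ A} (a + x)`. Writing
`Q = S \ {m, M}`, every set in the identity is `Q` with some of `m`, `M`, `d` added, so peeling
these off reduces both sides to the same product of `⋆ Q` with the factors `a + x`.
-/

open Finset

lemma Finset.ne_of_forall_le_of_forall_ge {α : Type*} [PartialOrder α] {S : Finset α} {m M : α}
    (hS : 1 < #S) (hm : ∀ x ∈ S, m ≤ x) (hM : ∀ x ∈ S, x ≤ M) : m ≠ M := by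
  obtain ⟨x, hx, y, hy, hxy⟩ := one_lt_card.mp hS
  rintro rfl
  exact hxy ((le_antisymm (hM x hx) (hm x hx)).trans (le_antisymm (hM y hy) (hm y hy)).symm)

lemma starOp'_insert {A : Finset ℝ} {a : ℝ} (ha : a ∉ A) :
    starOp' (insert a A) = (∏ x ∈ A, (a + x)) * starOp' A := by
  have row : ∀ x ∈ A, ∏ y ∈ (insert a A).filter (x < ·), (x + y) =
      (if x < a then a + x else 1) * ∏ y ∈ A.filter (x < ·), (x + y) := by
    intro x hx
    rw [filter_insert]
    split_ifs
    · rw [prod_insert fun h => ha (mem_filter.1 h).1, add_comm]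
    · rw [one_mul]
  have pair : ∀ x ∈ A, (if a < x then a + x else 1) * (if x < a then a + x else 1) = a + x := by
    intro x hx
    rcases (ne_of_mem_of_not_mem hx ha).lt_or_gt with h | h <;> simp [h, h.not_gt]
  unfold starOp'
  rw [prod_insert ha, filter_insert, if_neg (lt_irrefl a), prod_congr rfl row, prod_mul_distrib,
    prod_filter, ← mul_assoc, ← prod_mul_distrib, prod_congr rfl pair]

lemma starOp'_ratio_insert {Q : Finset ℝ} {m M d : ℝ} (hmM : m ≠ M) (hdm : d ≠ m)
    (hmQ : m ∉ Q) (hMQ : M ∉ Q) (hdQ : d ∉ Q) :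
    (M + m) * starOp' (insert d (insert m Q)) * starOp' (insert M Q) =
      (d + m) * starOp' (insert M (insert m Q)) * starOp' (insert d Q) := by
  have hdmQ : d ∉ insert m Q := by simp [hdm, hdQ]
  have hMmQ : M ∉ insert m Q := by simp [hmM.symm, hMQ]
  rw [starOp'_insert hdmQ, starOp'_insert hMmQ, starOp'_insert hmQ, starOp'_insert hMQ,
    starOp'_insert hdQ, prod_insert hmQ, prod_insert hmQ]
  ring

/-- Even-case analogue of the ratio simplification (24). -/
theorem star'_ratio_24 (S : Finset ℝ) (m M d : ℝ)
    (hcard : 2 ≤ S.card)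
    (hmS : m ∈ S) (hm : ∀ x ∈ S, m ≤ x)
    (hMS : M ∈ S) (hM : ∀ x ∈ S, x ≤ M)
    (hdS : d ∉ S) :
    (M + m) * starOp' ((insert d S).erase M) * starOp' (S.erase m) =
      (d + m) * starOp' S * starOp' (((insert d S).erase m).erase M) := by
  have hmM : m ≠ M := ne_of_forall_le_of_forall_ge hcard hm hM
  have hdm : d ≠ m := (ne_of_mem_of_not_mem hmS hdS).symm
  have hdM : d ≠ M := (ne_of_mem_of_not_mem hMS hdS).symm
  have hSm : S.erase m = insert M ((S.erase m).erase M) :=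
    (insert_erase (mem_erase.2 ⟨hmM.symm, hMS⟩)).symm
  have hSM : S.erase M = insert m ((S.erase m).erase M) := by
    rw [erase_right_comm, insert_erase (mem_erase.2 ⟨hmM, hmS⟩)]
  set Q := (S.erase m).erase M
  have hS : S = insert M (insert m Q) := by rw [← hSM, insert_erase hMS]
  have hdSM : (insert d S).erase M = insert d (insert m Q) := by rw [erase_insert_of_ne hdM, hSM]
  have hdSmM : ((insert d S).erase m).erase M = insert d Q := by
    rw [erase_insert_of_ne hdm, erase_insert_of_ne hdM]
  rw [hdSM, hdSmM, hSm, hS]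
  exact starOp'_ratio_insert hmM hdm (fun h => notMem_erase m S (mem_of_mem_erase h))
    (notMem_erase M _) (fun h => hdS (mem_of_mem_erase (mem_of_mem_erase h)))
end
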